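/- arXiv:2601.02835 — 4 statements merged into one kernel-verified Lean document; each statement's English description precedes it below -/
import Mathlib

section
/- Let $u$ and $v$ be partial isometries in a C*-algebra. The product $uv$ is a partial isometry if and only if the source projection $u^*u$ of $u$ commutes with the range projection $vv^*$ of $v$. -/
/-!
Write `p = u⋆u` and `q = vv⋆`. Since `(uv)(uv)⋆(uv) = u (qp) v`, while `u = up` and `v = qv`,
commutation of `p` and `q` makes `uv` a partial isometry. Conversely, multiplying
`(uv)(uv)⋆(uv) = uv` by `u⋆` on the left and `v⋆` on the right shows that `pq` is idempotent, and
an idempotent product of two projections in a C⋆-algebra is commutative: `x = pq - qpq` has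
`x⋆x = 0`, so `pq = qpq`, which is self-adjoint.
-/

def IsPartialIsometry {R : Type*} [Mul R] [Star R] (u : R) : Prop :=
  u * star u * u = u

theorem IsStarProjection.commute_of_isIdempotentElem_mul {E : Type*} [NonUnitalNormedRing E]
    [StarRing E] [CStarRing E] {p q : E} (hp : IsStarProjection p) (hq : IsStarProjection q)
    (hpq : IsIdempotentElem (p * q)) : Commute p q := by
  have hpp (r : E) : p * (p * r) = p * r := by rw [← mul_assoc, hp.isIdempotentElem.eq]
  have hqq (r : E) : q * (q * r) = q * r := by rw [← mul_assoc, hq.isIdempotentElem.eq]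
  have hpqpq : p * (q * (p * q)) = p * q := by simpa only [mul_assoc] using hpq.eq
  have hx : star (p * q - q * (p * q)) * (p * q - q * (p * q)) = 0 := by
    simp only [star_sub, star_mul, hp.isSelfAdjoint.star_eq, hq.isSelfAdjoint.star_eq, sub_mul,
      mul_sub, mul_assoc, hpp, hqq, hpqpq, sub_self]
  have hpq_eq : p * q = q * (p * q) :=
    sub_eq_zero.mp ((CStarRing.star_mul_self_eq_zero_iff _).mp hx)
  have hqp_eq : q * p = q * (p * q) := by
    simpa [star_mul, hp.isSelfAdjoint.star_eq, hq.isSelfAdjoint.star_eq, mul_assoc]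
      using congr(star $hpq_eq)
  exact hpq_eq.trans hqp_eq.symm

namespace IsPartialIsometry

variable {R : Type*} [Semigroup R] [StarMul R] {u v : R}

theorem isStarProjection_star_mul_self (hu : IsPartialIsometry u) :
    IsStarProjection (star u * u) where
  isIdempotentElem := by
    rw [IsIdempotentElem, mul_assoc, ← mul_assoc u, hu]
  isSelfAdjoint := .star_mul_self u

theorem isStarProjection_mul_star_self (hv : IsPartialIsometry v) :
    IsStarProjection (v * star v) where
  isIdempotentElem := by
    rw [IsIdempotentElem, ← mul_assoc, hv]
  isSelfAdjoint := .mul_star_self v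

theorem isIdempotentElem_star_mul_self_mul_mul_star_self (huv : IsPartialIsometry (u * v)) :
    IsIdempotentElem (star u * u * (v * star v)) := by
  have h := congr(star u * $huv * star v)
  simp only [star_mul, mul_assoc] at h
  simpa only [IsIdempotentElem, mul_assoc] using h

theorem mul_of_commute (hu : IsPartialIsometry u) (hv : IsPartialIsometry v)
    (h : Commute (star u * u) (v * star v)) : IsPartialIsometry (u * v) :=
  calc u * v * star (u * v) * (u * v)
      = u * (v * star v * (star u * u)) * v := by simp only [star_mul, mul_assoc]
    _ = u * (star u * u * (v * star v)) * v := by rw [h.eq]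
    _ = u * star u * u * (v * star v * v) := by simp only [mul_assoc]
    _ = u * v := by rw [hu, hv]

end IsPartialIsometry

theorem IsPartialIsometry.mul_iff {E : Type*} [NonUnitalNormedRing E] [StarRing E] [CStarRing E]
    {u v : E} (hu : IsPartialIsometry u) (hv : IsPartialIsometry v) :
    IsPartialIsometry (u * v) ↔ Commute (star u * u) (v * star v) :=
  ⟨fun huv => hu.isStarProjection_star_mul_self.commute_of_isIdempotentElem_mul
    hv.isStarProjection_mul_star_self huv.isIdempotentElem_star_mul_self_mul_mul_star_self,
    hu.mul_of_commute hv⟩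

theorem product_partial_isometry_iff_general {A : Type*} [NormedRing A] [StarRing A]
    [CStarRing A]
    (u v : A) (hu : u * star u * u = u) (hv : v * star v * v = v) :
    (u * v) * star (u * v) * (u * v) = u * v ↔
      (star u * u) * (v * star v) = (v * star v) * (star u * u) :=
  IsPartialIsometry.mul_iff hu hv

/-- Let `u` and `v` be partial isometries in a C*-algebra.
The product `u * v` is a partial isometry if and only if the source projection
`u* u` of `u` commutes with the range projection `v v*` of `v`. -/
theorem product_partial_isometry_iff {A : Type*} [NormedRing A] [StarRing A]
    [CStarRing A] [CompleteSpace A] [NormedAlgebra ℂ A] [StarModule ℂ A]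
    (u v : A) (hu : u * star u * u = u) (hv : v * star v * v = v) :
    (u * v) * star (u * v) * (u * v) = u * v ↔
      (star u * u) * (v * star v) = (v * star v) * (star u * u) :=
  product_partial_isometry_iff_general u v hu hv
end

section
/- Let $A$, $C(\mathbb{G}_A^1)$ be the universal C*-algebra generated by partial isometries $u_{\alpha\beta}$ ($1 \le \alpha,\beta \le N$) whose range projections $p = (u_{\alpha\beta}u_{\alpha\beta}^*)$ and source projections $q = (u_{\alpha\beta}^*u_{\alpha\beta})$ are magic unitaries, and $Ap = qA$. Then for all $\alpha_1,\alpha_2,\beta_1,\beta_2$: if $A_{\alpha_1\alpha_2} = 1$ and $A_{\beta_1\beta_2} = 0$ then $u_{\alpha_1\beta_1} u_{\alpha_2\beta_2} = 0$; similarly if $A_{\alpha_1\alpha_2} = 0$ and $A_{\beta_1\beta_2} = 1$ then $u_{\alpha_1\beta_1} u_{\alpha_2\beta_2} = 0$. -/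
/-- Projections (self-adjoint idempotents) in a C*-algebra summing to `1` are
mutually orthogonal. -/
theorem proj_ortho_aux {B : Type*} [NormedRing B] [StarRing B]
    [CStarRing B] [CompleteSpace B] [NormedAlgebra ℂ B] [StarModule ℂ B]
    {N : ℕ} (e : Fin N → B) (hsa : ∀ i, star (e i) = e i)
    (hid : ∀ i, e i * e i = e i) (hsum : ∑ i, e i = 1)
    {i j : Fin N} (hij : i ≠ j) : e i * e j = 0 := by
  letI : CStarAlgebra B := { }
  letI := CStarAlgebra.spectralOrder B
  haveI := CStarAlgebra.spectralOrderedRing B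
  have hstar : ∀ k, star (e k * e i) * (e k * e i) = e i * e k * e i := by
    intro k
    rw [star_mul, hsa, hsa, mul_assoc, ← mul_assoc (e k), hid, ← mul_assoc]
  have key : ∑ k, e i * e k * e i = e i := by
    rw [← Finset.sum_mul, ← Finset.mul_sum, hsum, mul_one, hid]
  have key2 : ∑ k ∈ Finset.univ.erase i, e i * e k * e i = 0 := by
    have h := Finset.add_sum_erase Finset.univ (fun k => e i * e k * e i) (Finset.mem_univ i)
    rw [key, hid, hid] at h
    rwa [add_eq_left] at h
  have hterm := (Finset.sum_eq_zero_iff_of_nonneg (fun k _ => by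
    rw [← hstar k]; exact star_mul_self_nonneg _)).mp key2
  have hj : e j * e i = 0 := by
    apply (CStarRing.star_mul_self_eq_zero_iff _).mp
    rw [hstar j]
    exact hterm j (Finset.mem_erase.mpr ⟨hij.symm, Finset.mem_univ j⟩)
  calc e i * e j = star (e j * e i) := by rw [star_mul, hsa, hsa]
    _ = 0 := by rw [hj, star_zero]

/-- Let `C(𝔾_A^1)` be (a C*-algebra containing) partial
isometries `u_{αβ}` (`1 ≤ α, β ≤ N`) whose range projections
`p = (u_{αβ} u_{αβ}^*)` and source projections `q = (u_{αβ}^* u_{αβ})` are magic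
unitaries, with `A p = q A`. Then for all `α₁, α₂, β₁, β₂`: if `A_{α₁α₂} = 1`
and `A_{β₁β₂} = 0`, then `u_{α₁β₁} u_{α₂β₂} = 0`; and similarly if
`A_{α₁α₂} = 0` and `A_{β₁β₂} = 1`, then `u_{α₁β₁} u_{α₂β₂} = 0`. -/
theorem nonadmissible_products_vanish {B : Type*} [NormedRing B] [StarRing B]
    [CStarRing B] [CompleteSpace B] [NormedAlgebra ℂ B] [StarModule ℂ B]
    {N : ℕ} (A : Matrix (Fin N) (Fin N) ℕ)
    (hA01 : ∀ i j, A i j = 0 ∨ A i j = 1)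
    (u : Fin N → Fin N → B)
    (hpi : ∀ a b, u a b * star (u a b) * u a b = u a b)
    (p q : Fin N → Fin N → B)
    (hp : ∀ a b, p a b = u a b * star (u a b))
    (hq : ∀ a b, q a b = star (u a b) * u a b)
    (hprow : ∀ a, ∑ b, p a b = 1) (hpcol : ∀ a, ∑ b, p b a = 1)
    (hqrow : ∀ a, ∑ b, q a b = 1) (hqcol : ∀ a, ∑ b, q b a = 1)
    (hint : ∀ a d, ∑ b, A a b • p b d = ∑ b, A b d • q a b) :
    ∀ a₁ a₂ b₁ b₂ : Fin N,
      ((A a₁ a₂ = 1 ∧ A b₁ b₂ = 0) ∨ (A a₁ a₂ = 0 ∧ A b₁ b₂ = 1)) →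
        u a₁ b₁ * u a₂ b₂ = 0 := by
  intro a₁ a₂ b₁ b₂ hcase
  -- basic facts about `p` and `q`
  have hpsa : ∀ a b, star (p a b) = p a b := fun a b => by
    rw [hp, star_mul, star_star]
  have hqsa : ∀ a b, star (q a b) = q a b := fun a b => by
    rw [hq, star_mul, star_star]
  have hpid : ∀ a b, p a b * p a b = p a b := fun a b => by
    rw [hp, show u a b * star (u a b) * (u a b * star (u a b))
      = (u a b * star (u a b) * u a b) * star (u a b) by noncomm_ring, hpi]
  have hqid : ∀ a b, q a b * q a b = q a b := fun a b => by
    rw [hq, show star (u a b) * u a b * (star (u a b) * u a b)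
      = star (u a b) * (u a b * star (u a b) * u a b) by noncomm_ring, hpi]
  -- orthogonality within the column `b₂` of `p` and the row `a₁` of `q`
  have hpo : ∀ c, c ≠ a₂ → p c b₂ * p a₂ b₂ = 0 := fun c hc =>
    proj_ortho_aux (fun k => p k b₂) (fun k => hpsa k b₂) (fun k => hpid k b₂)
      (hpcol b₂) hc
  have hqo : ∀ c, c ≠ b₁ → q a₁ b₁ * q a₁ c = 0 := fun c hc =>
    proj_ortho_aux (fun k => q a₁ k) (fun k => hqsa a₁ k) (fun k => hqid a₁ k)
      (hqrow a₁) hc.symm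
  -- the key intertwining computation
  have h1 : (∑ b, A a₁ b • p b b₂) * p a₂ b₂ = A a₁ a₂ • p a₂ b₂ := by
    rw [Finset.sum_mul, Finset.sum_eq_single a₂]
    · rw [smul_mul_assoc, hpid]
    · intro c _ hc
      rw [smul_mul_assoc, hpo c hc, smul_zero]
    · intro h; exact absurd (Finset.mem_univ a₂) h
  have h2 : q a₁ b₁ * (∑ b, A b b₂ • q a₁ b) = A b₁ b₂ • q a₁ b₁ := by
    rw [Finset.mul_sum, Finset.sum_eq_single b₁]
    · rw [mul_smul_comm, hqid]
    · intro c _ hc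
      rw [mul_smul_comm, hqo c hc, smul_zero]
    · intro h; exact absurd (Finset.mem_univ b₁) h
  have hkey : A a₁ a₂ • (q a₁ b₁ * p a₂ b₂) = A b₁ b₂ • (q a₁ b₁ * p a₂ b₂) := by
    calc A a₁ a₂ • (q a₁ b₁ * p a₂ b₂)
        = q a₁ b₁ * (A a₁ a₂ • p a₂ b₂) := by rw [mul_smul_comm]
      _ = q a₁ b₁ * ((∑ b, A a₁ b • p b b₂) * p a₂ b₂) := by rw [h1]
      _ = (q a₁ b₁ * (∑ b, A b b₂ • q a₁ b)) * p a₂ b₂ := by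
          rw [hint a₁ b₂, mul_assoc]
      _ = (A b₁ b₂ • q a₁ b₁) * p a₂ b₂ := by rw [h2]
      _ = A b₁ b₂ • (q a₁ b₁ * p a₂ b₂) := by rw [smul_mul_assoc]
  have hqp : q a₁ b₁ * p a₂ b₂ = 0 := by
    rcases hcase with ⟨hA1, hA0⟩ | ⟨hA0, hA1⟩
    · rw [hA1, hA0, one_smul, zero_smul] at hkey; exact hkey
    · rw [hA0, hA1, zero_smul, one_smul] at hkey; exact hkey.symm
  -- conclude
  have huq : u a₁ b₁ * q a₁ b₁ = u a₁ b₁ := by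
    rw [hq, ← mul_assoc, hpi]
  have hpu : p a₂ b₂ * u a₂ b₂ = u a₂ b₂ := by
    rw [hp, hpi]
  calc u a₁ b₁ * u a₂ b₂
      = (u a₁ b₁ * q a₁ b₁) * (p a₂ b₂ * u a₂ b₂) := by rw [huq, hpu]
    _ = u a₁ b₁ * (q a₁ b₁ * p a₂ b₂) * u a₂ b₂ := by noncomm_ring
    _ = 0 := by rw [hqp, mul_zero, zero_mul]
end

section
/- Let $H$ be a Hilbert space, $K = \bigotimes_{k \in \mathbb{Z}} H$ an infinite tensor product with respect to a unit reference vector, $\sigma$ the right shift unitary on $K$, and $(P_{ij})$ projections on $H$ forming a magic unitary. For each $k$ let $P_{ij}^{(k)}$ denote $P_{ij}$ acting on the $k$-th tensor factor. Define $w_{ij} = \sigma P_{ij}^{(0)}$. Then $w_{ij}^* w_{ij} = P_{ij}^{(0)}$, $w_{ij} w_{ij}^* = P_{ij}^{(1)}$, and for any indices, $w_{i_1 j_1} \cdots w_{i_m j_m} = \sigma^m P_{i_1 j_1}^{(1-m)} \cdots P_{i_m j_m}^{(0)}$; in particular each product $w_{i_1 j_1} \cdots w_{i_m j_m}$ is a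 partial isometry whose source and range projections commute. -/
/-!
Since `σ` shifts sites, `σ P^{(k)} = P^{(k+1)} σ`, all the `σ`'s in `w_{i₁j₁} ⋯ w_{iₘjₘ}` can be
moved to the left, giving `W = σ^m P` where `P` is a product of commuting projections on the
distinct sites `1 - m, …, 0`, hence a projection. As `σ^m` is unitary, `W* W = P` and
`W W* = σ^m P (σ^m)* = P'`, the same product on the sites `1, …, m`; so `W` is a partial isometry,
and `P`, `P'` commute because their sites are disjoint.
-/

open ContinuousLinearMap

theorem IsStarProjection.list_prod {R : Type*} [Semiring R] [StarRing R] {l : List R}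
    (hl : ∀ p ∈ l, IsStarProjection p) (hc : l.Pairwise Commute) :
    IsStarProjection l.prod := by
  induction l with
  | nil => exact IsStarProjection.one R
  | cons p l ih =>
    rw [List.pairwise_cons] at hc
    rw [List.prod_cons]
    exact (hl p List.mem_cons_self).mul (ih (fun q hq => hl q (List.mem_cons_of_mem p hq)) hc.2)
      (Commute.list_prod_right _ _ hc.1)

theorem IsStarProjection.list_prod_ofFn_sites {R : Type*} [Semiring R] [StarRing R] {m : ℕ}
    {x : Fin m → ℤ → R} (hx : ∀ t k, IsStarProjection (x t k))
    (hcomm : ∀ s t k l, k ≠ l → Commute (x s k) (x t l)) (c : ℤ) :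
    IsStarProjection (List.ofFn fun t => x t (c + (t : ℕ))).prod :=
  .list_prod (by simp [List.mem_ofFn, hx])
    (List.pairwise_ofFn.2 fun _ _ hst => hcomm _ _ _ _ (by omega))

section Monoid

variable {A : Type*} [Monoid A]

theorem SemiconjBy.list_prod_ofFn {a : A} {m : ℕ} {f g : Fin m → A}
    (h : ∀ t, SemiconjBy a (f t) (g t)) :
    SemiconjBy a (List.ofFn f).prod (List.ofFn g).prod := by
  induction m with
  | zero => exact SemiconjBy.one_right a
  | succ m ih =>
    simpa only [List.ofFn_succ, List.prod_cons] using (h 0).mul_right (ih fun t => h t.succ)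

theorem Commute.list_prod_ofFn {m n : ℕ} {f : Fin m → A} {g : Fin n → A}
    (h : ∀ s t, Commute (f s) (g t)) :
    Commute (List.ofFn f).prod (List.ofFn g).prod :=
  Commute.list_prod_left _ _ fun _ ha => Commute.list_prod_right _ _ fun _ hb => by
    obtain ⟨s, rfl⟩ := List.mem_ofFn.1 ha
    obtain ⟨t, rfl⟩ := List.mem_ofFn.1 hb
    exact h s t

variable {σ : A}

theorem SemiconjBy.pow_of_shift {x : ℤ → A} (h : ∀ k, SemiconjBy σ (x k) (x (k + 1)))
    (n : ℕ) (k : ℤ) : SemiconjBy (σ ^ n) (x k) (x (k + n)) := by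
  induction n with
  | zero => simp
  | succ n ih =>
    rw [pow_succ', Nat.cast_succ, ← add_assoc]
    exact (h (k + n)).mul_left ih

theorem SemiconjBy.pow_list_prod_ofFn_of_shift {m : ℕ} {x : Fin m → ℤ → A}
    (h : ∀ t k, SemiconjBy σ (x t k) (x t (k + 1))) (n : ℕ) (c : ℤ) :
    SemiconjBy (σ ^ n) (List.ofFn fun t => x t (c - n + (t : ℕ))).prod
      (List.ofFn fun t => x t (c + (t : ℕ))).prod :=
  .list_prod_ofFn fun t => by
    simpa only [add_right_comm, sub_add_cancel] using pow_of_shift (h t) n (c - n + (t : ℕ))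

theorem list_prod_ofFn_mul_eq_pow_mul {m : ℕ} {x : Fin m → ℤ → A}
    (h : ∀ t k, SemiconjBy σ (x t k) (x t (k + 1))) :
    (List.ofFn fun t => σ * x t 0).prod =
      σ ^ m * (List.ofFn fun t => x t (1 - (m : ℤ) + ((t : ℕ) : ℤ))).prod := by
  induction m with
  | zero => simp
  | succ n ih =>
    have hx0 : x 0 0 * σ ^ n = σ ^ n * x 0 (-n) := by
      simpa using (SemiconjBy.pow_of_shift (h 0) n (-n)).symm
    rw [List.ofFn_succ, List.prod_cons, ih fun t => h t.succ, List.ofFn_succ, List.prod_cons,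
      mul_assoc, ← mul_assoc (x 0 0), hx0, pow_succ']
    have h0 : (1 : ℤ) - (n + 1 : ℕ) + (0 : ℕ) = -n := by push_cast; ring
    have hsucc (t : Fin n) : (1 : ℤ) - (n + 1 : ℕ) + (t.succ : ℕ) = 1 - n + (t : ℕ) := by
      push_cast [Fin.val_succ]; ring
    simp only [mul_assoc, Fin.val_zero, h0, hsucc]

end Monoid

namespace IsStarProjection

variable {R : Type*} [Monoid R] [StarMul R] {u p : R}

theorem star_mul_self_of_isometry_mul (hu : star u * u = 1) (hp : IsStarProjection p) :
    star (u * p) * (u * p) = p := by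
  rw [star_mul, hp.isSelfAdjoint.star_eq, mul_assoc, ← mul_assoc (star u), hu, one_mul,
    hp.isIdempotentElem.eq]

theorem mul_star_self_of_coisometry_mul {q : R} (hu : u * star u = 1) (hp : IsStarProjection p)
    (hpq : SemiconjBy u p q) : u * p * star (u * p) = q := by
  rw [star_mul, hp.isSelfAdjoint.star_eq, mul_assoc, ← mul_assoc p, hp.isIdempotentElem.eq,
    ← mul_assoc, hpq.eq, mul_assoc, hu, mul_one]

theorem mul_star_mul_self_of_isometry_mul (hu : star u * u = 1) (hp : IsStarProjection p) :
    u * p * star (u * p) * (u * p) = u * p := by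
  rw [mul_assoc, hp.star_mul_self_of_isometry_mul hu, mul_assoc, hp.isIdempotentElem.eq]

end IsStarProjection

theorem shifted_projection_partial_isometries_general
    {K : Type*} [NormedAddCommGroup K] [InnerProductSpace ℂ K] [CompleteSpace K]
    {N : ℕ}
    (σ : K →L[ℂ] K) (hσ1 : σ * adjoint σ = 1) (hσ2 : adjoint σ * σ = 1)
    (Q : ℤ → Fin N → Fin N → (K →L[ℂ] K))
    (hQsa : ∀ k i j, adjoint (Q k i j) = Q k i j)
    (hQidem : ∀ k i j, Q k i j * Q k i j = Q k i j)
    (hQcomm : ∀ k k' i j i' j', k ≠ k' →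
      Q k i j * Q k' i' j' = Q k' i' j' * Q k i j)
    (hshift : ∀ k i j, σ * Q k i j = Q (k + 1) i j * σ)
    (w : Fin N → Fin N → (K →L[ℂ] K))
    (hw : ∀ i j, w i j = σ * Q 0 i j) :
    (∀ i j, adjoint (w i j) * w i j = Q 0 i j) ∧
    (∀ i j, w i j * adjoint (w i j) = Q 1 i j) ∧
    (∀ (m : ℕ) (is js : Fin m → Fin N),
      (List.ofFn fun t => w (is t) (js t)).prod =
        σ ^ m * (List.ofFn fun t =>
          Q (1 - (m : ℤ) + ((t : ℕ) : ℤ)) (is t) (js t)).prod) ∧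
    (∀ (m : ℕ) (is js : Fin m → Fin N) (W : K →L[ℂ] K),
      W = (List.ofFn fun t => w (is t) (js t)).prod →
        W * adjoint W * W = W ∧
          (adjoint W * W) * (W * adjoint W) = (W * adjoint W) * (adjoint W * W)) := by
  simp only [← star_eq_adjoint] at hσ1 hσ2 hQsa ⊢
  have hσ : σ ∈ unitary (K →L[ℂ] K) := ⟨hσ2, hσ1⟩
  have hQ (k i j) : IsStarProjection (Q k i j) := ⟨hQidem k i j, hQsa k i j⟩
  have hprod (m : ℕ) (is js : Fin m → Fin N) :
      (List.ofFn fun t => w (is t) (js t)).prod =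
        σ ^ m * (List.ofFn fun t => Q (1 - (m : ℤ) + ((t : ℕ) : ℤ)) (is t) (js t)).prod := by
    simp only [hw]
    exact list_prod_ofFn_mul_eq_pow_mul fun t k => hshift k (is t) (js t)
  refine ⟨fun i j => hw i j ▸ (hQ 0 i j).star_mul_self_of_isometry_mul hσ2,
    fun i j => hw i j ▸ (hQ 0 i j).mul_star_self_of_coisometry_mul hσ1 (hshift 0 i j),
    hprod, ?_⟩
  rintro m is js W rfl
  have hP := IsStarProjection.list_prod_ofFn_sites (x := fun t k => Q k (is t) (js t))
    (fun t k => hQ k (is t) (js t)) (fun s t k l hkl => hQcomm _ _ _ _ _ _ hkl) (1 - m)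
  have hrange := SemiconjBy.pow_list_prod_ofFn_of_shift
    (x := fun t k => Q k (is t) (js t)) (fun t k => hshift k (is t) (js t)) m 1
  have hσm := pow_mem hσ m
  rw [hprod]
  refine ⟨hP.mul_star_mul_self_of_isometry_mul (Unitary.star_mul_self_of_mem hσm), ?_⟩
  rw [hP.star_mul_self_of_isometry_mul (Unitary.star_mul_self_of_mem hσm),
    hP.mul_star_self_of_coisometry_mul (Unitary.mul_star_self_of_mem hσm) hrange]
  exact Commute.list_prod_ofFn fun s t => hQcomm _ _ _ _ _ _ (by omega)

/-- Let `K = ⨂_{k ∈ ℤ} H` be an infinite tensor product of a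
Hilbert space `H` (with respect to a unit reference vector), `σ` the right shift
unitary on `K`, and `(P_{ij})` projections on `H` forming a magic unitary; let
`Q k i j = P_{ij}^{(k)}` denote `P_{ij}` acting on the `k`-th tensor factor (so
that operators on distinct tensor factors commute and `σ P^{(k)} = P^{(k+1)} σ`).
Define `w_{ij} = σ P_{ij}^{(0)}`. Then `w_{ij}* w_{ij} = P_{ij}^{(0)}`,
`w_{ij} w_{ij}* = P_{ij}^{(1)}`, and for any indices
`w_{i₁j₁} ⋯ w_{iₘjₘ} = σ^m P_{i₁j₁}^{(1-m)} ⋯ P_{iₘjₘ}^{(0)}`; in particular each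
such product is a partial isometry whose source and range projections commute. -/
theorem shifted_projection_partial_isometries
    {K : Type*} [NormedAddCommGroup K] [InnerProductSpace ℂ K] [CompleteSpace K]
    {N : ℕ}
    (σ : K →L[ℂ] K) (hσ1 : σ * adjoint σ = 1) (hσ2 : adjoint σ * σ = 1)
    (Q : ℤ → Fin N → Fin N → (K →L[ℂ] K))
    (hQsa : ∀ k i j, adjoint (Q k i j) = Q k i j)
    (hQidem : ∀ k i j, Q k i j * Q k i j = Q k i j)
    (hQcomm : ∀ k k' i j i' j', k ≠ k' →
      Q k i j * Q k' i' j' = Q k' i' j' * Q k i j)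
    (hQrow : ∀ k i, ∑ j, Q k i j = 1)
    (hQcol : ∀ k j, ∑ i, Q k i j = 1)
    (hshift : ∀ k i j, σ * Q k i j = Q (k + 1) i j * σ)
    (w : Fin N → Fin N → (K →L[ℂ] K))
    (hw : ∀ i j, w i j = σ * Q 0 i j) :
    (∀ i j, adjoint (w i j) * w i j = Q 0 i j) ∧
    (∀ i j, w i j * adjoint (w i j) = Q 1 i j) ∧
    (∀ (m : ℕ) (is js : Fin m → Fin N),
      (List.ofFn fun t => w (is t) (js t)).prod =
        σ ^ m * (List.ofFn fun t =>
          Q (1 - (m : ℤ) + ((t : ℕ) : ℤ)) (is t) (js t)).prod) ∧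
    (∀ (m : ℕ) (is js : Fin m → Fin N) (W : K →L[ℂ] K),
      W = (List.ofFn fun t => w (is t) (js t)).prod →
        W * adjoint W * W = W ∧
          (adjoint W * W) * (W * adjoint W) = (W * adjoint W) * (adjoint W * W)) :=
  shifted_projection_partial_isometries_general σ hσ1 hσ2 Q hQsa hQidem hQcomm hshift w hw
end

section
/- Let $A = \begin{pmatrix} 1 & 1 \\ 1 & 0 \end{pmatrix}$ (Fibonacci matrix). Suppose $p = (p_{ij})$ and $q = (q_{ij})$ are $2\times 2$ magic unitaries over a unital C*-algebra with $Ap = qA$. Then $p$ and $q$ are both the identity matrix: $p_{11} = p_{22} = q_{11} = q_{22} = 1$ and $p_{12} = p_{21} = q_{12} = q_{21} = 0$. -/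
/-! The `(1,0)` and `(0,1)` entries of `A p = q A` read `p₀₀ = q₁₀ + q₁₁` and `q₀₀ = p₀₁ + p₁₁`,
so a row sum of `q` and a column sum of `p` give `p₀₀ = q₀₀ = 1`; additive cancellation in the
remaining row and column sums then forces both matrices to be the identity. -/

open Matrix

theorem eq_diagonal_of_row_col_sums_of_apply_zero_zero {M : Type*} [AddCancelCommMonoid M] {e : M}
    {p : Fin 2 → Fin 2 → M} (hrow : ∀ i, ∑ j, p i j = e) (hcol : ∀ j, ∑ i, p i j = e)
    (h00 : p 0 0 = e) : p 1 1 = e ∧ p 0 1 = 0 ∧ p 1 0 = 0 := by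
  have hrow0 := hrow 0
  have hrow1 := hrow 1
  have hcol0 := hcol 0
  simp only [Fin.sum_univ_two, h00] at hrow0 hrow1 hcol0
  have h01 : p 0 1 = 0 := add_eq_left.mp hrow0
  have h10 : p 1 0 = 0 := add_eq_left.mp hcol0
  rw [h10, zero_add] at hrow1
  exact ⟨hrow1, h01, h10⟩

theorem fibonacci_intertwining_apply {M : Type*} [AddCommMonoid M] {p q : Fin 2 → Fin 2 → M}
    (h : ∀ i j, ∑ l, !![1, 1; 1, 0] i l • p l j =
      ∑ l, (!![1, 1; 1, 0] : Matrix (Fin 2) (Fin 2) ℕ) l j • q i l) :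
    p 0 0 = q 1 0 + q 1 1 ∧ q 0 0 = p 0 1 + p 1 1 := by
  have h10 := h 1 0
  have h01 := h 0 1
  simp only [Fin.sum_univ_two, of_apply, cons_val', cons_val_zero, cons_val_one, empty_val',
    cons_val_fin_one, one_smul, zero_smul, add_zero] at h10 h01
  exact ⟨h10, h01.symm⟩

theorem fibonacci_magic_unitaries_trivial_general {B : Type*} [NormedRing B]
    (A : Matrix (Fin 2) (Fin 2) ℕ) (hA : A = !![1, 1; 1, 0])
    (p q : Fin 2 → Fin 2 → B)
    (hp_row : ∀ i, ∑ j, p i j = 1) (hp_col : ∀ j, ∑ i, p i j = 1)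
    (hq_row : ∀ i, ∑ j, q i j = 1) (hq_col : ∀ j, ∑ i, q i j = 1)
    (hint : ∀ i j, ∑ l, A i l • p l j = ∑ l, A l j • q i l) :
    p 0 0 = 1 ∧ p 1 1 = 1 ∧ p 0 1 = 0 ∧ p 1 0 = 0 ∧
      q 0 0 = 1 ∧ q 1 1 = 1 ∧ q 0 1 = 0 ∧ q 1 0 = 0 := by
  subst hA
  obtain ⟨hp00, hq00⟩ := fibonacci_intertwining_apply hint
  rw [← Fin.sum_univ_two (q 1), hq_row] at hp00
  rw [← Fin.sum_univ_two (p · 1), hp_col] at hq00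
  obtain ⟨hp11, hp01, hp10⟩ := eq_diagonal_of_row_col_sums_of_apply_zero_zero hp_row hp_col hp00
  obtain ⟨hq11, hq01, hq10⟩ := eq_diagonal_of_row_col_sums_of_apply_zero_zero hq_row hq_col hq00
  exact ⟨hp00, hp11, hp01, hp10, hq00, hq11, hq01, hq10⟩

/-- Let `A = !![1, 1; 1, 0]` be the Fibonacci matrix. Suppose
`p = (p_{ij})` and `q = (q_{ij})` are `2 × 2` magic unitaries over a unital
C*-algebra with `A p = q A`. Then `p` and `q` are both the identity matrix:
`p₁₁ = p₂₂ = q₁₁ = q₂₂ = 1` and `p₁₂ = p₂₁ = q₁₂ = q₂₁ = 0`. -/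
theorem fibonacci_magic_unitaries_trivial {B : Type*} [NormedRing B] [StarRing B]
    [CStarRing B] [CompleteSpace B] [NormedAlgebra ℂ B] [StarModule ℂ B]
    (A : Matrix (Fin 2) (Fin 2) ℕ) (hA : A = !![1, 1; 1, 0])
    (p q : Fin 2 → Fin 2 → B)
    (hp_sa : ∀ i j, star (p i j) = p i j) (hp_idem : ∀ i j, p i j * p i j = p i j)
    (hp_row : ∀ i, ∑ j, p i j = 1) (hp_col : ∀ j, ∑ i, p i j = 1)
    (hq_sa : ∀ i j, star (q i j) = q i j) (hq_idem : ∀ i j, q i j * q i j = q i j)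
    (hq_row : ∀ i, ∑ j, q i j = 1) (hq_col : ∀ j, ∑ i, q i j = 1)
    (hint : ∀ i j, ∑ l, A i l • p l j = ∑ l, A l j • q i l) :
    p 0 0 = 1 ∧ p 1 1 = 1 ∧ p 0 1 = 0 ∧ p 1 0 = 0 ∧
      q 0 0 = 1 ∧ q 1 1 = 1 ∧ q 0 1 = 0 ∧ q 1 0 = 0 :=
  fibonacci_magic_unitaries_trivial_general A hA p q hp_row hp_col hq_row hq_col hint
end
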